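/- arXiv:1903.02106 — 4 statements merged into one kernel-verified Lean document; each statement's English description precedes it below -/
import Mathlib

section
/- Let d ≥ 0, e = 2^d, and ν a suitable tuple with n_{e-1} = 1. Then for every i with 1 ≤ i ≤ e−1, the first entry of σ^{n_i}(C_i) is zero, where C_i is the i-th column of M_d and σ is the cyclic rotation moving the last entry to the front. -/
open Matrix

/-- The Pascal-triangle matrix over `F₂`: `M 0 = (1)`,
`M (d+1) = [[M d, M d],[0, M d]]`. -/
def pascalM : (d : ℕ) → Matrix (Fin (2^d)) (Fin (2^d)) (ZMod 2)
  | 0 => fun _ _ => 1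
  | d+1 =>
    Matrix.reindex (finSumFinEquiv.trans (finCongr (by rw [pow_succ]; ring)))
      (finSumFinEquiv.trans (finCongr (by rw [pow_succ]; ring)))
      (Matrix.fromBlocks (pascalM d) (pascalM d) 0 (pascalM d))

/-- The `n`-th vector of `F₂^e` in lexicographic order (as binary words,
index `0` being the most significant bit). -/
def vecOf (e n : ℕ) : Fin e → ZMod 2 := fun i => ((n / 2^(e - 1 - i.val)) % 2 : ℕ)

/-- Rotation moving the last entry of a vector to the front. -/
def rot {e : ℕ} (v : Fin e → ZMod 2) : Fin e → ZMod 2 :=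
  fun i => v ⟨(i.val + (e - 1)) % e, Nat.mod_lt _ i.pos⟩

/-- `Suitable e ν` : the tuple `(ν 0, …, ν (e-1))` (representing `n_1,…,n_e`)
satisfies `n_e = 0` and `n_{i+1} ≤ n_i ≤ n_{i+1}+1`. -/
def Suitable (e : ℕ) (ν : ℕ → ℕ) : Prop :=
  ν (e - 1) = 0 ∧ ∀ j, j + 2 ≤ e → ν (j+1) ≤ ν j ∧ ν j ≤ ν (j+1) + 1

/-- The matrix `M_d^ν`, whose `j`-th column is the `j`-th column of `M_d`
rotated `ν j` times. -/
def pascalMnu (d : ℕ) (ν : ℕ → ℕ) : Matrix (Fin (2^d)) (Fin (2^d)) (ZMod 2) :=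
  fun i j => (rot^[ν j.val] (fun r => pascalM d r j)) i

/-- The `d`-th Levin block `λ_d = (M_d w_0)(M_d w_1)⋯(M_d w_{2^e-1})`
as an `ℕ`-indexed word (`e = 2^d`). -/
def levinBlock (d : ℕ) (p : ℕ) : ZMod 2 :=
  (pascalM d).mulVec (vecOf (2^d) (p / 2^d)) ⟨p % 2^d, Nat.mod_lt _ (Nat.two_pow_pos d)⟩

/-- Length of the `d`-th Levin block: `2^d · 2^(2^d)`. -/
def levinLen (d : ℕ) : ℕ := 2^d * 2^(2^d)

/-- The binary expansion of Levin's number `λ = λ₀λ₁λ₂⋯`. -/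
def levinWord (p : ℕ) : ZMod 2 := go 0 p
where
  go (d p : ℕ) : ZMod 2 :=
    if p < levinLen d then levinBlock d p else go (d+1) (p - levinLen d)
  termination_by p
  decreasing_by
    
    have h1 : 0 < levinLen d :=
      Nat.mul_pos (Nat.two_pow_pos d) (Nat.two_pow_pos (2^d))
    omega

/-- Levin's number as a real number in `[0,1)`. -/
noncomputable def levinReal : ℝ := ∑' p : ℕ, ((levinWord p).val : ℝ) / 2^(p+1)

/-- Distance from a real number to the nearest integer. -/
noncomputable def torusDist (y : ℝ) : ℝ := |y - round y|

/-- The pair-correlation counting function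
`F_N(s) = (1/N) · #{(i,j) : 1 ≤ i ≠ j ≤ N, ‖x_i − x_j‖ < s/N}`. -/
noncomputable def pairF (x : ℕ → ℝ) (N : ℕ) (s : ℝ) : ℝ :=
  (Nat.card {p : ℕ × ℕ // 1 ≤ p.1 ∧ p.1 ≤ N ∧ 1 ≤ p.2 ∧ p.2 ≤ N ∧ p.1 ≠ p.2 ∧
      torusDist (x p.1 - x p.2) < s / N} : ℝ) / N

/-- Poissonian pair correlations: `F_N(s) → 2s` for every `s ≥ 0`. -/
def PoissonianPC (x : ℕ → ℝ) : Prop :=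
  ∀ s : ℝ, 0 ≤ s → Filter.Tendsto (fun N => pairF x N s) Filter.atTop (nhds (2*s))

theorem pascalM_tri : ∀ d (i j : Fin (2^d)), j.val < i.val → pascalM d i j = 0 := by
  intro d
  induction d with
  | zero => intro i j hij; omega
  | succ d ih =>
    intro i j hij
    simp only [pascalM, Matrix.reindex_apply, Matrix.submatrix_apply, Equiv.symm_trans_apply]
    rcases hi : finSumFinEquiv.symm ((finCongr (by rw [pow_succ]; ring : 2^d+2^d = 2^(d+1))).symm i) with a | a <;>
      rcases hj : finSumFinEquiv.symm ((finCongr (by rw [pow_succ]; ring : 2^d+2^d = 2^(d+1))).symm j) with b | b <;>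
      rw [Equiv.symm_apply_eq] at hi hj <;>
      apply_fun Fin.val at hi hj <;>
      simp [finSumFinEquiv_apply_left, finSumFinEquiv_apply_right] at hi hj
    · exact ih a b (by omega)
    · exact absurd hij (by omega)
    · rfl
    · exact ih a b (by omega)

theorem rot_iter {e : ℕ} (v : Fin e → ZMod 2) (n : ℕ) (i : Fin e) :
    rot^[n] v i = v ⟨(i.val + n*(e-1)) % e, Nat.mod_lt _ i.pos⟩ := by
  induction n generalizing i with
  | zero => simp [Nat.mod_eq_of_lt i.isLt]
  | succ n ih =>
    rw [Function.iterate_succ_apply']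
    show (rot^[n] v) _ = v _
    rw [ih]
    congr 1
    apply Fin.ext
    show ((i.val + (e-1)) % e + n*(e-1)) % e = (i.val + (n+1)*(e-1)) % e
    rw [Nat.mod_add_mod]
    ring_nf

theorem suitable_bounds {e : ℕ} (ν : ℕ → ℕ) (h : Suitable e ν) (h1 : ν (e-2) = 1) :
    ∀ k j, j + k = e - 2 → 2 ≤ e → 1 ≤ ν j ∧ ν j ≤ e - 1 - j := by
  intro k
  induction k with
  | zero =>
    intro j hj he
    have hje : j = e - 2 := by omega
    subst hje
    omega
  | succ k ih =>
    intro j hj he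
    have h2 := ih (j+1) (by omega) he
    have h3 := h.2 j (by omega)
    omega

/-- if `ν` is suitable and `n_{e-1} = 1` (i.e. `ν (e-2) = 1`),
then every column of `M_d^ν` except the last has first entry `0`. -/
theorem pascalMnu_first_entry_zero (d : ℕ) (hd : 1 ≤ d) (ν : ℕ → ℕ)
    (h : Suitable (2^d) ν) (h1 : ν (2^d - 2) = 1) :
    ∀ j : Fin (2^d), j.val < 2^d - 1 →
      pascalMnu d ν ⟨0, Nat.two_pow_pos d⟩ j = 0 := by
  intro j hj
  have he2 : 2 ≤ 2^d := by
    calc 2 = 2^1 := rfl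
    _ ≤ 2^d := Nat.pow_le_pow_right (by norm_num) hd
  have hb := suitable_bounds ν h h1 (2^d - 2 - j.val) j.val (by omega) he2
  obtain ⟨m, hm⟩ : ∃ m, ν j.val = m + 1 := ⟨ν j.val - 1, by omega⟩
  have hme : m + 1 ≤ 2^d - 1 - j.val := by omega
  have key : ∀ e : ℕ, m + 1 ≤ e → (m+1)*(e-1) % e = e - (m+1) := by
    intro e hme'
    obtain ⟨k, rfl⟩ : ∃ k, e = m + 1 + k := ⟨e - (m+1), by omega⟩
    have h5 : (m+1)*(m+1+k-1) = k + m*(m+1+k) := by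
      have h6 : m+1+k-1 = m+k := by omega
      rw [h6]; ring
    rw [h5, Nat.add_mul_mod_self_right, Nat.mod_eq_of_lt (by omega)]
    omega
  unfold pascalMnu
  rw [rot_iter]
  have hgt : j.val < (0 + ν j.val * (2^d-1)) % 2^d := by
    rw [Nat.zero_add, hm, key (2^d) (by omega)]
    omega
  exact pascalM_tri d _ j hgt
end

section
/- Let d ≥ 0, e = 2^d, and ν a suitable tuple. The matrix M_d^ν, obtained from M_d by rotating column i cyclically by n_i positions (last entry moved to front, applied n_i times), is non-singular over F_2. -/
open Matrix

private lemma lucas2 (n k : ℕ) :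
    ((n.choose k : ℕ) : ZMod 2) =
      (((n % 2).choose (k % 2) : ℕ) : ZMod 2) * (((n / 2).choose (k / 2) : ℕ) : ZMod 2) := by
  have h := Choose.choose_modEq_choose_mod_mul_choose_div (n := n) (k := k) (p := 2)
  have h2 := (ZMod.intCast_eq_intCast_iff _ _ _).mpr h
  push_cast at h2 ⊢
  exact h2

private lemma lucasA (d : ℕ) : ∀ a b : ℕ, b < 2^d →
    (((2^d + a).choose b : ℕ) : ZMod 2) = ((a.choose b : ℕ) : ZMod 2) := by
  induction d with
  | zero => intro a b hb; interval_cases b; simp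
  | succ d ih =>
    intro a b hb
    have hp : (2:ℕ)^(d+1) = 2 * 2^d := by rw [pow_succ]; ring
    rw [lucas2 (2^(d+1)+a) b, lucas2 a b,
      show (2^(d+1)+a) % 2 = a % 2 by omega, show (2^(d+1)+a) / 2 = 2^d + a/2 by omega,
      ih (a/2) (b/2) (by omega)]

private lemma lucasB (d : ℕ) : ∀ a b : ℕ, a < 2^d → b < 2^d →
    (((2^d + a).choose (2^d + b) : ℕ) : ZMod 2) = ((a.choose b : ℕ) : ZMod 2) := by
  induction d with
  | zero => intro a b ha hb; interval_cases a <;> interval_cases b <;> simp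
  | succ d ih =>
    intro a b ha hb
    have hp : (2:ℕ)^(d+1) = 2 * 2^d := by rw [pow_succ]; ring
    rw [lucas2 (2^(d+1)+a) (2^(d+1)+b), lucas2 a b,
      show (2^(d+1)+a) % 2 = a % 2 by omega, show (2^(d+1)+a) / 2 = 2^d + a/2 by omega,
      show (2^(d+1)+b) % 2 = b % 2 by omega, show (2^(d+1)+b) / 2 = 2^d + b/2 by omega,
      ih (a/2) (b/2) (by omega) (by omega)]

private lemma lucasC (d : ℕ) : ∀ i : ℕ, i < 2^d →
    (((2^d - 1).choose i : ℕ) : ZMod 2) = 1 := by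
  induction d with
  | zero => intro i hi; interval_cases i; simp
  | succ d ih =>
    intro i hi
    have hp : (2:ℕ)^(d+1) = 2 * 2^d := by rw [pow_succ]; ring
    have h2 : (0:ℕ) < 2^d := Nat.two_pow_pos d
    rw [lucas2 (2^(d+1)-1) i,
      show (2^(d+1)-1) % 2 = 1 by omega, show (2^(d+1)-1) / 2 = 2^d - 1 by omega,
      ih (i/2) (by omega)]
    have : i % 2 = 0 ∨ i % 2 = 1 := by omega
    rcases this with h | h <;> simp [h]

private lemma sumdec {m : ℕ} (x : Fin (m + m)) :
    finSumFinEquiv.symm x =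
      if h : (x:ℕ) < m then Sum.inl ⟨x, h⟩ else Sum.inr ⟨(x:ℕ) - m, by omega⟩ := by
  split_ifs with h
  · rw [Equiv.symm_apply_eq, finSumFinEquiv_apply_left]
    ext; simp
  · rw [Equiv.symm_apply_eq, finSumFinEquiv_apply_right]
    ext; simp; omega

private lemma pascal_apply (d : ℕ) : ∀ i j : Fin (2^d),
    pascalM d i j = (((j:ℕ).choose (i:ℕ) : ℕ) : ZMod 2) := by
  induction d with
  | zero =>
    intro i j
    have hi : (i:ℕ) = 0 := by omega
    have hj : (j:ℕ) = 0 := by omega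
    simp [pascalM, hi, hj]
  | succ d ih =>
    intro i j
    have hp : (0:ℕ) < 2^d := Nat.two_pow_pos d
    have hi2 := i.isLt
    have hj2 := j.isLt
    have hpow : (2:ℕ)^(d+1) = 2^d + 2^d := by rw [pow_succ]; ring
    show (Matrix.reindex _ _ _ : Matrix (Fin (2^(d+1))) (Fin (2^(d+1))) (ZMod 2)) i j = _
    rw [Matrix.reindex_apply, Matrix.submatrix_apply]
    simp only [show ∀ (h : 2^d + 2^d = 2^(d+1)) (x : Fin (2^(d+1))),
        (finSumFinEquiv.trans (finCongr h)).symm x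
          = finSumFinEquiv.symm (finCongr h.symm x) from fun _ _ => rfl, sumdec, finCongr_apply, Fin.coe_cast]
    by_cases hi : (i : ℕ) < 2^d <;>
      by_cases hj : (j : ℕ) < 2^d <;>
        simp only [hi, hj, dif_pos, dif_neg, not_lt, dite_true, dite_false]
    · rw [Matrix.fromBlocks_apply₁₁, ih]
    · rw [Matrix.fromBlocks_apply₁₂, ih]
      have h := lucasA d ((j:ℕ) - 2^d) (i:ℕ) hi
      rw [show 2^d + ((j:ℕ) - 2^d) = (j:ℕ) by omega] at h
      exact h.symm
    · rw [Matrix.fromBlocks_apply₂₁]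
      show (0 : ZMod 2) = _
      rw [Nat.choose_eq_zero_of_lt (by omega)]
      simp
    · rw [Matrix.fromBlocks_apply₂₂, ih]
      have h := lucasB d ((j:ℕ) - 2^d) ((i:ℕ) - 2^d) (by omega) (by omega)
      rw [show 2^d + ((j:ℕ) - 2^d) = (j:ℕ) by omega,
        show 2^d + ((i:ℕ) - 2^d) = (i:ℕ) by omega] at h
      exact h.symm

private def cycFun (e : ℕ) : Fin e → Fin e :=
  fun i => ⟨(i.val + (e - 1)) % e, Nat.mod_lt _ i.pos⟩

private lemma rot_iterate {e : ℕ} (n : ℕ) (v : Fin e → ZMod 2) (i : Fin e) :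
    (rot^[n] v) i = v ((cycFun e)^[n] i) := by
  induction n generalizing v i with
  | zero => rfl
  | succ n ih =>
    rw [Function.iterate_succ_apply, Function.iterate_succ_apply']
    exact ih (rot v) i

/-- the matrix of multiplication by `1 + y`. -/
private def Tm (e : ℕ) : Matrix (Fin e) (Fin e) (ZMod 2) :=
  fun k m => (if k = m then 1 else 0) + (if (k:ℕ) = (m:ℕ) + 1 then 1 else 0)

private lemma mulT {e : ℕ} (A : Matrix (Fin e) (Fin e) (ZMod 2)) (i j : Fin e) :
    (A * Tm e) i j = A i j + (if h : (j:ℕ)+1 < e then A i ⟨(j:ℕ)+1, h⟩ else 0) := by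
  rw [Matrix.mul_apply]
  have expand : ∀ m : Fin e, A i m * Tm e m j
      = (if m = j then A i m else 0) + (if (m:ℕ) = (j:ℕ)+1 then A i m else 0) := by
    intro m
    simp only [Tm]
    split_ifs <;> ring
  rw [Finset.sum_congr rfl (fun m _ => expand m), Finset.sum_add_distrib,
    Finset.sum_ite_eq' Finset.univ j (fun m => A i m)]
  simp only [Finset.mem_univ, if_true]
  congr 1
  split_ifs with h
  · rw [Finset.sum_eq_single (⟨(j:ℕ)+1, h⟩ : Fin e)]
    · simp
    · intro b _ hb
      rw [if_neg]
      intro hv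
      exact hb (Fin.ext hv)
    · intro hb; exact absurd (Finset.mem_univ _) hb
  · apply Finset.sum_eq_zero
    intro m _
    rw [if_neg]
    omega

private lemma Tpow_tri {e : ℕ} (n : ℕ) : ∀ k j : Fin e, (k:ℕ) < (j:ℕ) →
    (Tm e ^ n) k j = 0 := by
  induction n with
  | zero =>
    intro k j hkj
    rw [pow_zero]
    exact Matrix.one_apply_ne (by intro h; rw [h] at hkj; omega)
  | succ n ih =>
    intro k j hkj
    rw [pow_succ, mulT, ih k j hkj]
    split_ifs with h
    · rw [ih k _ (by simp; omega)]
      ring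
    · ring

private lemma Tpow_diag {e : ℕ} (n : ℕ) : ∀ j : Fin e, (Tm e ^ n) j j = 1 := by
  induction n with
  | zero => intro j; rw [pow_zero, Matrix.one_apply_eq]
  | succ n ih =>
    intro j
    rw [pow_succ, mulT, ih j]
    split_ifs with h
    · rw [Tpow_tri n j _ (by simp)]
      ring
    · ring

private lemma submatrix_mul_left {e : ℕ} (A B : Matrix (Fin e) (Fin e) (ZMod 2))
    (f : Fin e → Fin e) : (A * B).submatrix f id = A.submatrix f id * B := by
  ext i j
  simp [Matrix.mul_apply]

private lemma zmod2_add_self (x : ZMod 2) : x + x = 0 := by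
  have h2 : (2 : ZMod 2) = 0 := by decide
  calc x + x = 2 * x := by ring
  _ = 0 := by rw [h2]; ring

private lemma shift_eq (d : ℕ) :
    (pascalM d).submatrix (cycFun (2^d)) id = pascalM d * Tm (2^d) := by
  have he : (0:ℕ) < 2^d := Nat.two_pow_pos d
  ext i j
  rw [Matrix.submatrix_apply, id_eq, mulT]
  simp only [pascal_apply]
  have hi2 := i.isLt
  have hj2 := j.isLt
  have hcv : ((cycFun (2^d) i : Fin (2^d)) : ℕ) = ((i:ℕ) + (2^d - 1)) % 2^d := rfl
  by_cases hi : (i:ℕ) = 0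
  · have hc : ((cycFun (2^d) i : Fin (2^d)) : ℕ) = 2^d - 1 := by
      rw [hcv, hi, Nat.zero_add, Nat.mod_eq_of_lt (by omega)]
    rw [hc, hi]
    by_cases hj1 : (j:ℕ) + 1 < 2^d
    · rw [dif_pos hj1, Nat.choose_eq_zero_of_lt (by omega)]
      simp only [Nat.choose_zero_right, Nat.cast_zero, Nat.cast_one]
      exact (zmod2_add_self 1).symm
    · rw [dif_neg hj1, show (j:ℕ) = 2^d - 1 by omega, Nat.choose_self]
      simp
  · have hc : ((cycFun (2^d) i : Fin (2^d)) : ℕ) = (i:ℕ) - 1 := by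
      rw [hcv, show (i:ℕ) + (2^d - 1) = ((i:ℕ) - 1) + 2^d by omega,
        Nat.add_mod_right, Nat.mod_eq_of_lt (by omega)]
    rw [hc]
    by_cases hj1 : (j:ℕ) + 1 < 2^d
    · rw [dif_pos hj1]
      have key := Nat.choose_succ_succ' (j:ℕ) ((i:ℕ) - 1)
      rw [show (i:ℕ) - 1 + 1 = (i:ℕ) by omega] at key
      have hcast : (((j:ℕ)+1).choose (i:ℕ) : ZMod 2)
          = ((j:ℕ).choose ((i:ℕ)-1) : ℕ) + ((j:ℕ).choose (i:ℕ) : ℕ) := by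
        rw [key]; push_cast; ring
      have hself := zmod2_add_self (((j:ℕ).choose (i:ℕ) : ℕ) : ZMod 2)
      linear_combination -hcast - hself
    · rw [dif_neg hj1, show (j:ℕ) = 2^d - 1 by omega,
        lucasC d ((i:ℕ) - 1) (by omega), lucasC d (i:ℕ) (by omega), add_zero]

private lemma submatrix_iter (d : ℕ) (n : ℕ) :
    (pascalM d).submatrix ((cycFun (2^d))^[n]) id = pascalM d * (Tm (2^d))^n := by
  induction n with
  | zero => simp
  | succ n ih =>
    have : (cycFun (2^d))^[n+1] = (cycFun (2^d))^[n] ∘ (cycFun (2^d)) :=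
      Function.iterate_succ _ _
    rw [this, show (pascalM d).submatrix ((cycFun (2^d))^[n] ∘ (cycFun (2^d))) id
        = ((pascalM d).submatrix ((cycFun (2^d))^[n]) id).submatrix (cycFun (2^d)) id from rfl,
      ih, submatrix_mul_left, shift_eq, pow_succ', ← mul_assoc]


/-- for every suitable tuple `ν`, the matrix `M_d^ν` is
non-singular over `F₂`. -/
theorem pascalMnu_isUnit (d : ℕ) (ν : ℕ → ℕ) (h : Suitable (2^d) ν) :
    IsUnit (pascalMnu d ν) := by
  classical
  set e := 2^d
  set B : Matrix (Fin e) (Fin e) (ZMod 2) := fun k j => ((Tm e) ^ (ν (j:ℕ))) k j with hB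
  have hfac : pascalMnu d ν = pascalM d * B := by
    ext i j
    have h1 : pascalMnu d ν i j = pascalM d ((cycFun e)^[ν (j:ℕ)] i) j := by
      rw [pascalMnu, rot_iterate]
    have h2 := congrFun (congrFun (submatrix_iter d (ν (j:ℕ))) i) j
    rw [Matrix.submatrix_apply, id_eq] at h2
    rw [h1, h2, Matrix.mul_apply, Matrix.mul_apply]
  have hdM : (pascalM d).det = 1 := by
    rw [Matrix.det_of_upperTriangular (M := pascalM d)]
    · apply Finset.prod_eq_one
      intro i _
      rw [pascal_apply, Nat.choose_self, Nat.cast_one]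
    · intro i j hij
      rw [pascal_apply, Nat.choose_eq_zero_of_lt (by exact hij), Nat.cast_zero]
  have hdB : B.det = 1 := by
    rw [Matrix.det_of_lowerTriangular B]
    · exact Finset.prod_eq_one fun j _ => Tpow_diag _ j
    · intro i j hij
      exact Tpow_tri _ i j hij
  rw [Matrix.isUnit_iff_isUnit_det, hfac, Matrix.det_mul, hdM, hdB, one_mul]
  exact isUnit_one
end

section
/- Let d ≥ 0, e = 2^d, and ν a suitable tuple. The last column of M_d^ν equals the all-ones vector, and consequently for every even index n (in the lexicographic enumeration w_0, ..., w_{2^e−1} of F_2^e), the vectors M_d^ν w_n and M_d^ν w_{n+1} are complementary. -/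
open Matrix

/-! The last column of `M_{d+1}` stacks two copies of that of `M_d`, so it is all ones;
since `ν` vanishes on the last column, the same holds for `M_d^ν`. For even `n`,
`w_{n+1} = w_n + e_e`, hence `M_d^ν w_{n+1} = M_d^ν w_n + 1`. -/

lemma pascalM_apply_last_col (d : ℕ) (i : Fin (2^d)) :
    pascalM d i ⟨2^d - 1, Nat.sub_one_lt_of_lt (Nat.two_pow_pos d)⟩ = 1 := by
  induction d with
  | zero => rfl
  | succ d ih =>
    have hpow : 2^d + 2^d = 2^(d+1) := by rw [pow_succ]; ring
    show reindex (finSumFinEquiv.trans (finCongr hpow)) (finSumFinEquiv.trans (finCongr hpow))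
      (fromBlocks (pascalM d) (pascalM d) 0 (pascalM d)) i _ = 1
    have hlast : (finSumFinEquiv.trans (finCongr hpow)).symm
        ⟨2^(d+1) - 1, Nat.sub_one_lt_of_lt (Nat.two_pow_pos (d+1))⟩
        = Sum.inr ⟨2^d - 1, Nat.sub_one_lt_of_lt (Nat.two_pow_pos d)⟩ := by
      rw [Equiv.symm_apply_eq, Fin.ext_iff]
      simp only [Equiv.trans_apply, finSumFinEquiv_apply_right, finCongr_apply, Fin.val_cast,
        Fin.val_natAdd]
      have := Nat.two_pow_pos d
      omega
    rw [reindex_apply, submatrix_apply, hlast]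
    rcases (finSumFinEquiv.trans (finCongr hpow)).symm i with a | b
    · exact ih a
    · exact ih b

lemma pascalMnu_apply_last_col {d : ℕ} {ν : ℕ → ℕ} (hν : ν (2^d - 1) = 0) (i : Fin (2^d)) :
    pascalMnu d ν i ⟨2^d - 1, Nat.sub_one_lt_of_lt (Nat.two_pow_pos d)⟩ = 1 := by
  simp only [pascalMnu, hν, Function.iterate_zero, id]
  exact pascalM_apply_last_col d i

lemma vecOf_succ_of_even {e n : ℕ} (he : 0 < e) (hn : Even n) :
    vecOf e (n + 1) = vecOf e n + Pi.single ⟨e - 1, Nat.sub_one_lt_of_lt he⟩ 1 := by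
  have hn2 : n % 2 = 0 := Nat.even_iff.mp hn
  funext j
  simp only [vecOf, Pi.add_apply]
  by_cases hj : j.val = e - 1
  · obtain rfl : j = ⟨e - 1, Nat.sub_one_lt_of_lt he⟩ := Fin.ext hj
    rw [Pi.single_eq_same, Nat.sub_self, pow_zero, Nat.div_one, Nat.div_one, Nat.add_mod, hn2]
    decide
  · have hndvd : ¬ 2 ^ (e - 1 - j.val) ∣ n + 1 := fun hdvd =>
      Nat.not_even_iff_odd.mpr hn.add_one ((even_iff_two_dvd).mpr
        ((dvd_pow_self 2 (by have := j.isLt; omega)).trans hdvd))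
    rw [Pi.single_eq_of_ne (fun h => hj (congrArg Fin.val h)), add_zero,
      Nat.succ_div_of_not_dvd hndvd]

/-- for a suitable tuple `ν`, the last column of `M_d^ν` is the
all-ones vector, and consequently for every even `n` the vectors `M_d^ν w_n`
and `M_d^ν w_{n+1}` are complementary. -/
theorem pascalMnu_last_column_and_complementary (d : ℕ) (ν : ℕ → ℕ)
    (h : Suitable (2^d) ν) :
    (∀ i : Fin (2^d),
      pascalMnu d ν i ⟨2^d - 1, by have := Nat.two_pow_pos d; omega⟩ = 1) ∧
    (∀ n : ℕ, Even n → n + 1 < 2^(2^d) →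
      ∀ i : Fin (2^d),
        (pascalMnu d ν).mulVec (vecOf (2^d) n) i = 0 ↔
        (pascalMnu d ν).mulVec (vecOf (2^d) (n+1)) i = 1) := by
  have hlast := pascalMnu_apply_last_col h.1
  refine ⟨hlast, fun n hn _ i => ?_⟩
  rw [vecOf_succ_of_even (Nat.two_pow_pos d) hn, mulVec_add, mulVec_single_one, Pi.add_apply,
    col_apply, hlast i, add_eq_right]
end

section
/- Let d ≥ 1, e = 2^d, and λ_d the d-th Levin block. For each binary word a of length d+e with complement of a_1...a_d equal to a_{e+1}...a_{e+d}, the number of occurrences of a inside λ_d whose alignment places the block boundary between M_d w_n and M_d w_{n+1} (n even) strictly inside positions d through e of a is exactly k, where k is the number of zeros among a_d ... a_e. -/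
open Matrix

lemma sumdecomp {d : ℕ} (h : 2^d + 2^d = 2^(d+1)) (i : Fin (2^(d+1))) :
    ((finSumFinEquiv.trans (finCongr h)).symm i) =
      if hi : i.val < 2^d then Sum.inl (⟨i.val, hi⟩ : Fin (2^d))
      else Sum.inr (⟨i.val - 2^d, by omega⟩ : Fin (2^d)) := by
  rw [Equiv.symm_trans_apply]
  split_ifs with hi
  · have : (finCongr h).symm i = Fin.castAdd (2^d) ⟨i.val, hi⟩ := by
      apply Fin.ext; simp
    rw [this, finSumFinEquiv_symm_apply_castAdd]
  · have : (finCongr h).symm i = Fin.natAdd (2^d) ⟨i.val - 2^d, by omega⟩ := by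
      apply Fin.ext; simp; omega
    rw [this, finSumFinEquiv_symm_apply_natAdd]

lemma pascalM_succ_apply {d : ℕ} (i j : Fin (2^(d+1))) :
    pascalM (d+1) i j =
      if hi : i.val < 2^d then
        (if hj : j.val < 2^d then pascalM d ⟨i.val, hi⟩ ⟨j.val, hj⟩
         else pascalM d ⟨i.val, hi⟩ ⟨j.val - 2^d, by omega⟩)
      else
        (if hj : j.val < 2^d then 0
         else pascalM d ⟨i.val - 2^d, by omega⟩ ⟨j.val - 2^d, by omega⟩) := by
  show (Matrix.reindex _ _ _ ) i j = _
  rw [Matrix.reindex_apply, Matrix.submatrix_apply, sumdecomp, sumdecomp]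
  split_ifs with hi hj hj <;> rfl

lemma pascalM_last_row {d : ℕ} (i j : Fin (2^d)) (hi : i.val = 2^d - 1) :
    pascalM d i j = if j.val = 2^d - 1 then 1 else 0 := by
  induction d with
  | zero =>
    have hj : j.val = 0 := by omega
    simp [pascalM, hj]
  | succ d ih =>
    have h1 : 0 < 2^d := Nat.two_pow_pos d
    have h2 : (2:ℕ)^(d+1) = 2^d + 2^d := by rw [pow_succ]; ring
    rw [pascalM_succ_apply, dif_neg (show ¬ i.val < 2^d by omega)]
    rcases Nat.lt_or_ge j.val (2^d) with hj | hj
    · rw [dif_pos hj, if_neg (by omega)]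
    · rw [dif_neg (by omega), ih _ _ (show i.val - 2^d = 2^d - 1 by omega)]
      by_cases h : j.val = 2^(d+1) - 1
      · rw [if_pos (show j.val - 2^d = 2^d - 1 by omega), if_pos h]
      · rw [if_neg (show ¬ (j.val - 2^d = 2^d - 1) by omega), if_neg h]

lemma pascalM_last_col {d : ℕ} (i j : Fin (2^d)) (hj : j.val = 2^d - 1) :
    pascalM d i j = 1 := by
  induction d with
  | zero => simp [pascalM]
  | succ d ih =>
    have h1 : 0 < 2^d := Nat.two_pow_pos d
    have h2 : (2:ℕ)^(d+1) = 2^d + 2^d := by rw [pow_succ]; ring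
    rw [pascalM_succ_apply]
    have hj' : ¬ j.val < 2^d := by omega
    rcases Nat.lt_or_ge i.val (2^d) with hi | hi
    · rw [dif_pos hi, dif_neg hj']; exact ih _ _ (show j.val - 2^d = 2^d - 1 by omega)
    · rw [dif_neg (by omega), dif_neg hj']; exact ih _ _ (show j.val - 2^d = 2^d - 1 by omega)

lemma pascalM_det (d : ℕ) : (pascalM d).det = 1 := by
  induction d with
  | zero =>
    have : Subsingleton (Fin (2^0)) := by rw [pow_zero]; infer_instance
    rw [Matrix.det_eq_elem_of_subsingleton _ ⟨0, Nat.two_pow_pos 0⟩]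
    rfl
  | succ d ih =>
    show (Matrix.reindex _ _ _).det = 1
    rw [Matrix.det_reindex_self, Matrix.det_fromBlocks_zero₂₁, ih, one_mul]

lemma mulVec_pascalM_last {d : ℕ} (v : Fin (2^d) → ZMod 2) (i : Fin (2^d))
    (hi : i.val = 2^d - 1) : (pascalM d).mulVec v i = v i := by
  unfold Matrix.mulVec dotProduct
  have key : ∀ j : Fin (2^d), pascalM d i j * v j = if j = i then v j else 0 := by
    intro j
    rw [pascalM_last_row i j hi]
    by_cases h : j = i
    · rw [if_pos (by omega), if_pos h, one_mul]
    · rw [if_neg, if_neg h, zero_mul]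
      intro hc
      exact h (Fin.ext (by omega))
  simp only [key]
  exact (Finset.sum_ite_eq' Finset.univ i v).trans (if_pos (Finset.mem_univ i))

lemma vecOf_injOn {e : ℕ} {n n' : ℕ} (hn : n < 2^e) (hn' : n' < 2^e)
    (h : vecOf e n = vecOf e n') : n = n' := by
  apply Nat.eq_of_testBit_eq
  intro k
  rcases Nat.lt_or_ge k e with hk | hk
  · have := congrFun h ⟨e - 1 - k, by omega⟩
    simp only [vecOf] at this
    have hv := congrArg ZMod.val this
    rw [ZMod.val_natCast, ZMod.val_natCast] at hv
    have he : e - 1 - (e - 1 - k) = k := by omega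
    rw [he] at hv
    rw [Nat.testBit_eq_decide_div_mod_eq, Nat.testBit_eq_decide_div_mod_eq, decide_eq_decide]
    omega
  · rw [Nat.testBit_lt_two_pow (lt_of_lt_of_le hn (Nat.pow_le_pow_right (by norm_num) hk)),
      Nat.testBit_lt_two_pow (lt_of_lt_of_le hn' (Nat.pow_le_pow_right (by norm_num) hk))]

lemma vecOf_surj {e : ℕ} (v : Fin e → ZMod 2) : ∃ n < 2^e, vecOf e n = v := by
  have hbij : Function.Bijective (fun n : Fin (2^e) => vecOf e n.val) := by
    rw [Fintype.bijective_iff_injective_and_card]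
    constructor
    · intro n n' h
      exact Fin.ext (vecOf_injOn n.isLt n'.isLt h)
    · simp [ZMod.card]
  obtain ⟨n, hn⟩ := hbij.2 v
  exact ⟨n.val, n.isLt, hn⟩

lemma vecOf_succ_even {e : ℕ} {n : ℕ} (hn : n % 2 = 0) (i : Fin e) :
    vecOf e (n+1) i = vecOf e n i + (if i.val = e - 1 then 1 else 0) := by
  by_cases h : i.val = e - 1
  · have h0 : e - 1 - i.val = 0 := by omega
    simp only [vecOf, h0, if_pos h, pow_zero, Nat.div_one]
    have : (n+1) % 2 = 1 := by omega
    rw [this, hn]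
    norm_num
  · obtain ⟨k, hk⟩ : ∃ k, e - 1 - i.val = k + 1 := ⟨e - 2 - i.val, by omega⟩
    simp only [vecOf, hk, if_neg h, add_zero]
    have : (n+1) / 2^(k+1) = n / 2^(k+1) := by
      rw [pow_succ, Nat.mul_comm, ← Nat.div_div_eq_div_mul, ← Nat.div_div_eq_div_mul]
      congr 1
      omega
    rw [this]

lemma mulVec_pascalM_succ {d : ℕ} {n : ℕ} (hn : n % 2 = 0) (i : Fin (2^d)) :
    (pascalM d).mulVec (vecOf (2^d) (n+1)) i
      = (pascalM d).mulVec (vecOf (2^d) n) i + 1 := by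
  have hv : vecOf (2^d) (n+1)
      = vecOf (2^d) n + (fun j : Fin (2^d) => if j.val = 2^d - 1 then 1 else 0) := by
    funext j
    rw [vecOf_succ_even hn j]
    rfl
  rw [hv, Matrix.mulVec_add, Pi.add_apply]
  congr 1
  unfold Matrix.mulVec dotProduct
  have key : ∀ j : Fin (2^d), pascalM d i j * (if j.val = 2^d - 1 then (1:ZMod 2) else 0)
      = if j = (⟨2^d - 1, by have := Nat.two_pow_pos d; omega⟩ : Fin (2^d)) then 1 else 0 := by
    intro j
    by_cases h : j.val = 2^d - 1
    · rw [if_pos h, mul_one, if_pos (Fin.ext h), pascalM_last_col _ _ h]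
    · rw [if_neg h, mul_zero, if_neg (fun hc => h (by rw [hc]))]
  simp only [key]
  exact (Finset.sum_ite_eq' Finset.univ _ (fun _ => (1:ZMod 2))).trans
    (if_pos (Finset.mem_univ _))

lemma levinBlock_mul_add {d n r : ℕ} (hr : r < 2^d) :
    levinBlock d (n * 2^d + r) = (pascalM d).mulVec (vecOf (2^d) n) ⟨r, hr⟩ := by
  have h1 : (n * 2^d + r) / 2^d = n := by
    rw [Nat.mul_comm, Nat.mul_add_div (Nat.two_pow_pos d), Nat.div_eq_of_lt hr, add_zero]
  have h2 : (n * 2^d + r) % 2^d = r := by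
    rw [Nat.mul_comm, Nat.mul_add_mod, Nat.mod_eq_of_lt hr]
  unfold levinBlock
  rw [h1]
  exact congrArg _ (Fin.ext h2)

lemma pascalM_mulVec_inj {d : ℕ} {x y : Fin (2^d) → ZMod 2}
    (h : (pascalM d).mulVec x = (pascalM d).mulVec y) : x = y := by
  haveI : Invertible (pascalM d) :=
    (pascalM d).invertibleOfIsUnitDet (by rw [pascalM_det]; exact isUnit_one)
  have h2 := congrArg (fun v => (⅟(pascalM d)).mulVec v) h
  simpa [Matrix.mulVec_mulVec, invOf_mul_self, Matrix.one_mulVec] using h2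

lemma pascalM_mulVec_surj {d : ℕ} (u : Fin (2^d) → ZMod 2) :
    ∃ x, (pascalM d).mulVec x = u := by
  haveI : Invertible (pascalM d) :=
    (pascalM d).invertibleOfIsUnitDet (by rw [pascalM_det]; exact isUnit_one)
  exact ⟨(⅟(pascalM d)).mulVec u, by
    rw [Matrix.mulVec_mulVec, mul_invOf_self, Matrix.one_mulVec]⟩

/-- The word `u` determined by `a` and the alignment `z`. -/
def uw (d z : ℕ) (hz : z ≤ 2^d) (a : Fin (d + 2^d) → ZMod 2) : Fin (2^d) → ZMod 2 :=
  fun i => if h : 2^d - z ≤ i.val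
    then a ⟨i.val - (2^d - z), by have := i.isLt; omega⟩
    else a ⟨z + i.val, by have := i.isLt; omega⟩ + 1

lemma occ_to_u {d : ℕ} {a : Fin (d + 2^d) → ZMod 2} {n z : ℕ}
    (hn2 : n % 2 = 0) (hdz : 1 ≤ z) (hze : z ≤ 2^d)
    (hocc : ∀ t : Fin (d + 2^d), levinBlock d (n * 2^d + (2^d - z) + t.val) = a t) :
    (pascalM d).mulVec (vecOf (2^d) n) = uw d z hze a := by
  funext i
  unfold uw
  by_cases h : 2^d - z ≤ i.val
  · rw [dif_pos h]
    have ht := hocc ⟨i.val - (2^d - z), by have := i.isLt; omega⟩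
    have harg : n * 2^d + (2^d - z) + (i.val - (2^d - z)) = n * 2^d + i.val := by omega
    rw [show ((⟨i.val - (2^d - z), by have := i.isLt; omega⟩ : Fin (d + 2^d)).val)
        = i.val - (2^d - z) from rfl, harg, levinBlock_mul_add i.isLt] at ht
    exact ht
  · rw [dif_neg h]
    have ht := hocc ⟨z + i.val, by have := i.isLt; omega⟩
    have h2 : (n+1) * 2^d = n * 2^d + 2^d := by ring
    have harg : n * 2^d + (2^d - z) + (z + i.val) = (n+1) * 2^d + i.val := by omega
    rw [show ((⟨z + i.val, by have := i.isLt; omega⟩ : Fin (d + 2^d)).val)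
        = z + i.val from rfl, harg, levinBlock_mul_add i.isLt,
      mulVec_pascalM_succ hn2] at ht
    have hz2 : ∀ x y : ZMod 2, x + 1 = y → x = y + 1 := by decide
    exact hz2 _ _ ht

set_option maxHeartbeats 1000000 in
lemma u_to_occ {d : ℕ} {a : Fin (d + 2^d) → ZMod 2}
    (hcomp : ∀ i : Fin d,
      a ⟨2^d + i.val, by rw [Nat.add_comm d (2^d)]; exact Nat.add_lt_add_left i.isLt (2^d)⟩ =
        1 - a ⟨i.val, Nat.lt_of_lt_of_le i.isLt (Nat.le_add_right d (2^d))⟩)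
    {n z : ℕ} (hn2 : n % 2 = 0) (hdz : d ≤ z) (hze : z ≤ 2^d)
    (hu : (pascalM d).mulVec (vecOf (2^d) n) = uw d z hze a) :
    ∀ t : Fin (d + 2^d), levinBlock d (n * 2^d + (2^d - z) + t.val) = a t := by
  intro t
  by_cases htz : t.val < z
  · have hr : 2^d - z + t.val < 2^d := by omega
    have harg : n * 2^d + (2^d - z) + t.val = n * 2^d + (2^d - z + t.val) := by omega
    rw [harg, levinBlock_mul_add hr, hu]
    unfold uw
    rw [dif_pos (show 2^d - z ≤ 2^d - z + t.val from Nat.le_add_right _ _)]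
    exact congrArg a (Fin.ext (by first | omega | simp | (simp; omega)))
  · have hr : t.val - z < 2^d := by have := t.isLt; omega
    have h2 : (n+1) * 2^d = n * 2^d + 2^d := by ring
    have harg : n * 2^d + (2^d - z) + t.val = (n+1) * 2^d + (t.val - z) := by omega
    rw [harg, levinBlock_mul_add hr, mulVec_pascalM_succ hn2, hu]
    unfold uw
    have hcomp' : ∀ (p : ℕ) (hp : p < d) (hq : 2^d + p < d + 2^d) (hp2 : p < d + 2^d),
        a ⟨2^d + p, hq⟩ = 1 - a ⟨p, hp2⟩ := by
      intro p hp hq hp2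
      exact hcomp ⟨p, hp⟩
    by_cases hcase : 2^d - z ≤ t.val - z
    · rw [dif_pos hcase]
      have htlt := t.isLt
      have hte : 2^d ≤ t.val := by omega
      have hgoal := hcomp' (t.val - 2^d) (by omega) (by omega) (by omega)
      have e2 : a ⟨2^d + (t.val - 2^d), by omega⟩ = a t :=
        congrArg a (Fin.ext (show 2^d + (t.val - 2^d) = t.val by omega))
      have e1 : a ⟨(⟨t.val - z, hr⟩ : Fin (2^d)).val - (2^d - z),
            by show t.val - z - (2^d - z) < d + 2^d; omega⟩
          = a ⟨t.val - 2^d, by omega⟩ :=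
        congrArg a (Fin.ext (show (t.val - z) - (2^d - z) = t.val - 2^d by omega))
      rw [e1, ← e2, hgoal]
      exact (by decide : ∀ x : ZMod 2, x + 1 = 1 - x) _
    · rw [dif_neg hcase]
      have htlt := t.isLt
      have e1 : a ⟨z + (⟨t.val - z, hr⟩ : Fin (2^d)).val,
            by show z + (t.val - z) < d + 2^d; omega⟩ = a t :=
        congrArg a (Fin.ext (show z + (t.val - z) = t.val by omega))
      rw [e1]
      exact (by decide : ∀ x : ZMod 2, x + 1 + 1 = x) _

lemma u_last_digit {d : ℕ} {a : Fin (d + 2^d) → ZMod 2} {n z : ℕ}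
    (hdz : 1 ≤ z) (hze : z ≤ 2^d) (hz1 : z - 1 < d + 2^d)
    (hu : (pascalM d).mulVec (vecOf (2^d) n) = uw d z hze a) :
    ((n % 2 : ℕ) : ZMod 2) = a ⟨z - 1, hz1⟩ := by
  have hpos := Nat.two_pow_pos d
  have hlt : 2^d - 1 < 2^d := by omega
  have h1 := congrFun hu ⟨2^d - 1, hlt⟩
  rw [mulVec_pascalM_last _ _ rfl] at h1
  have h2 : vecOf (2^d) n ⟨2^d - 1, hlt⟩ = ((n % 2 : ℕ) : ZMod 2) := by
    show ((n / 2^(2^d - 1 - (2^d - 1)) % 2 : ℕ) : ZMod 2) = _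
    rw [Nat.sub_self, pow_zero, Nat.div_one]
  have h3 : uw d z hze a ⟨2^d - 1, hlt⟩ = a ⟨z - 1, hz1⟩ := by
    unfold uw
    rw [dif_pos (show 2^d - z ≤ (⟨2^d - 1, hlt⟩ : Fin (2^d)).val from by
      show 2^d - z ≤ 2^d - 1; omega)]
    exact congrArg a (Fin.ext (show 2^d - 1 - (2^d - z) = z - 1 by omega))
  rw [h2, h3] at h1
  exact h1

set_option maxHeartbeats 2000000 in
/-- for a word `a` of length `d + e` (`e = 2^d`, `d ≥ 1`) whose
first `d` letters are complementary to its last `d` letters, the number of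
occurrences of `a` in `λ_d` at alignments `z` with `d ≤ z ≤ e` (the block
boundary falling inside positions `d` through `e` of `a`, with even block
index `n`) is exactly the number `k` of zeros among `a_d … a_e`. -/
theorem count_occurrences_eq_zeros (d : ℕ) (hd : 1 ≤ d)
    (a : Fin (d + 2^d) → ZMod 2)
    (hcomp : ∀ i : Fin d,
      a ⟨2^d + i.val, by rw [Nat.add_comm d (2^d)]; exact Nat.add_lt_add_left i.isLt (2^d)⟩ =
        1 - a ⟨i.val, Nat.lt_of_lt_of_le i.isLt (Nat.le_add_right d (2^d))⟩) :
    Nat.card {nz : ℕ × ℕ // Even nz.1 ∧ nz.1 < 2^(2^d) ∧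
      d ≤ nz.2 ∧ nz.2 ≤ 2^d ∧
      ∀ t : Fin (d + 2^d),
        levinBlock d (nz.1 * 2^d + (2^d - nz.2) + t.val) = a t}
    = (Finset.univ.filter (fun j : Fin (d + 2^d) =>
        d ≤ j.val + 1 ∧ j.val + 1 ≤ 2^d ∧ a j = 0)).card := by
  classical
  have hpos := Nat.two_pow_pos d
  rw [← Nat.card_eq_finsetCard]
  apply Nat.card_congr
  refine Equiv.ofBijective (fun p =>
    ⟨⟨p.1.2 - 1, by have h := p.2.2.2.2.1; omega⟩, by
      obtain ⟨⟨n, z⟩, hev, hn, hdz, hze, hocc⟩ := p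
      simp only [Finset.mem_filter, Finset.mem_univ, true_and]
      refine ⟨by omega, by omega, ?_⟩
      have hn2 : n % 2 = 0 := Nat.even_iff.mp hev
      have hu := occ_to_u hn2 (by omega) hze hocc
      rw [← u_last_digit (by omega) hze (by omega) hu, hn2]
      rfl⟩) ⟨?_, ?_⟩
  · -- injective
    rintro ⟨⟨n, z⟩, hev, hn, hdz, hze, hocc⟩ ⟨⟨n', z'⟩, hev', hn', hdz', hze', hocc'⟩ hfq
    simp only [Subtype.mk.injEq, Fin.mk.injEq] at hfq
    have hz : z = z' := by omega
    subst hz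
    have hn2 : n % 2 = 0 := Nat.even_iff.mp hev
    have hn2' : n' % 2 = 0 := Nat.even_iff.mp hev'
    have hu := occ_to_u hn2 (by omega) hze hocc
    have hu' := occ_to_u hn2' (by omega) hze' hocc'
    have hveq := pascalM_mulVec_inj (hu.trans hu'.symm)
    have hne : n = n' := vecOf_injOn hn hn' hveq
    subst hne
    rfl
  · -- surjective
    rintro ⟨j, hj⟩
    simp only [Finset.mem_filter, Finset.mem_univ, true_and] at hj
    obtain ⟨hj1, hj2, hj3⟩ := hj
    obtain ⟨x, hx⟩ := pascalM_mulVec_surj (uw d (j.val + 1) hj2 a)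
    obtain ⟨n, hne, hnx⟩ := vecOf_surj x
    have hu : (pascalM d).mulVec (vecOf (2^d) n) = uw d (j.val + 1) hj2 a := by
      rw [hnx]; exact hx
    have hld := u_last_digit (by omega) hj2 (by have := j.isLt; omega) hu
    have hjz : (⟨j.val + 1 - 1, by have := j.isLt; omega⟩ : Fin (d + 2^d)) = j :=
      Fin.ext (show j.val + 1 - 1 = j.val by omega)
    rw [hjz, hj3] at hld
    have hn2 : n % 2 = 0 := by
      have hv := congrArg ZMod.val hld
      rw [ZMod.val_natCast, ZMod.val_zero] at hv
      omega
    have hocc := u_to_occ hcomp hn2 (by omega) hj2 hu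
    exact ⟨⟨(n, j.val + 1), Nat.even_iff.mpr hn2, hne, by omega, hj2, hocc⟩,
      Subtype.ext (Fin.ext (by show j.val + 1 - 1 = j.val; omega))⟩
end
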